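/- For the degree-4 binary form ω viewed as a V_4-valued variable, the skewing relation ⟨⟨P_4, ω⟩_3, ω⟩_1 = (1/2)⟨P_4, ⟨ω,ω⟩_3⟩_1 holds identically for all P_4 ∈ V_4; that is, the constant a_4 in the decomposition of the skewing map δ equals 1/2. -/

import Mathlib

open MvPolynomial

noncomputable section

abbrev P := MvPolynomial (Fin 2) ℝ

/-- partial derivative, as a plain function -/
def pd (i : Fin 2) (u : P) : P := MvPolynomial.pderiv i u

/-- The Clebsch-Gordan pairing of binary forms. -/
def CG (p : ℕ) (u v : P) : P :=
  ((p.factorial : ℝ)⁻¹) •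
    ∑ k ∈ Finset.range (p + 1),
      (((-1 : ℝ) ^ k * (p.choose k : ℝ)) •
        ((pd 0)^[p - k] ((pd 1)^[k] u) * (pd 0)^[k] ((pd 1)^[p - k] v)))

/-!
The difference of the two sides, `skewDefect P₄ u v`, is trilinear, and `V₄` is spanned by the
monomials `x^a y^(4-a)`. Leibniz's rule gives `⟨x^a y^b, x^c y^d⟩_p` as an explicit integer
multiple `cgCoeff p a b c d / p!` of `x^(a+c-p) y^(b+d-p)`, so on a triple of basis monomials the
defect is `skewCoeff a b c / 12` times a single monomial, and the `5³` integer identities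
`skewCoeff a b c = 0` are decided by evaluation.
-/

namespace MvPolynomial

variable {σ R : Type*} [CommSemiring R]

theorem iterate_pderiv_X_pow (i : σ) (m a : ℕ) :
    (pderiv i)^[m] (X i ^ a : MvPolynomial σ R) = a.descFactorial m • X i ^ (a - m) := by
  induction m with
  | zero => simp
  | succ m ih =>
    rw [Function.iterate_succ_apply', ih, map_nsmul, pderiv_pow, pderiv_X_self,
      Nat.descFactorial_succ, Nat.sub_sub]
    simp only [nsmul_eq_mul, Nat.cast_mul]
    ring

theorem iterate_pderiv_mul_of_pderiv_eq_zero (i : σ) (m : ℕ) (f : MvPolynomial σ R)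
    {g : MvPolynomial σ R} (hg : pderiv i g = 0) :
    (pderiv i)^[m] (f * g) = (pderiv i)^[m] f * g := by
  induction m with
  | zero => rfl
  | succ m ih =>
    rw [Function.iterate_succ_apply', Function.iterate_succ_apply', ih, pderiv_mul, hg,
      mul_zero, add_zero]

variable (R) in
theorem homogeneousSubmodule_fin_two_eq_span (n : ℕ) :
    homogeneousSubmodule (Fin 2) R n =
      Submodule.span R ((fun a => X 0 ^ a * X 1 ^ (n - a)) '' Set.Iic n) := by
  apply le_antisymm
  · rw [homogeneousSubmodule_eq_finsupp_supported, AddMonoidAlgebra.supported_eq_span_single,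
      Submodule.span_le]
    rintro _ ⟨d, hd, rfl⟩
    have hdeg : d 0 + d 1 = n := by simpa [Finsupp.degree_eq_sum, Fin.sum_univ_two] using hd
    refine Submodule.subset_span ⟨d 0, by simp only [Set.mem_Iic]; omega, ?_⟩
    dsimp only
    rw [single_eq_monomial, monomial_eq, Finsupp.prod_fintype _ _ (by simp)]
    simp [Fin.prod_univ_two, ← hdeg]
  · rw [Submodule.span_le]
    rintro _ ⟨a, ha, rfl⟩
    simpa [Nat.add_sub_cancel' (Set.mem_Iic.1 ha)] using
      (isHomogeneous_X_pow (0 : Fin 2) a).mul (isHomogeneous_X_pow (R := R) (1 : Fin 2) (n - a))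

end MvPolynomial

section

variable {R M N : Type*} [Semiring R] [AddCommMonoid M] [Module R M] [AddCommMonoid N]
  [Module R N]

theorem IsLinearMap.eq_zero_of_mem_span {f : M → N} (hf : IsLinearMap R f) {s : Set M}
    (hs : ∀ x ∈ s, f x = 0) {x : M} (hx : x ∈ Submodule.span R s) : f x = 0 :=
  LinearMap.eqOn_span' (f := hf.mk' f) (g := 0) hs hx

theorem eq_zero_of_mem_span_of_isLinearMap₃ {f : M → M → M → N}
    (h₁ : ∀ y z, IsLinearMap R (f · y z)) (h₂ : ∀ x z, IsLinearMap R (f x · z))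
    (h₃ : ∀ x y, IsLinearMap R (f x y)) {s : Set M}
    (hs : ∀ x ∈ s, ∀ y ∈ s, ∀ z ∈ s, f x y z = 0) {x y z : M} (hx : x ∈ Submodule.span R s)
    (hy : y ∈ Submodule.span R s) (hz : z ∈ Submodule.span R s) : f x y z = 0 :=
  (h₁ y z).eq_zero_of_mem_span (fun x hx => (h₂ x z).eq_zero_of_mem_span
    (fun y hy => (h₃ x y).eq_zero_of_mem_span (hs x hx y hy) hz) hy) hx

end

lemma iterate_pd_eq_pow (i : Fin 2) (n : ℕ) :
    (pd i)^[n] = ⇑((pderiv i).toLinearMap ^ n : Module.End ℝ P) := by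
  funext u
  rw [Module.End.pow_apply]
  rfl

lemma iterate_pd_zero_X_pow_mul_X_pow (m a b : ℕ) :
    (pd 0)^[m] (X 0 ^ a * X 1 ^ b) = (a.descFactorial m : ℝ) • (X 0 ^ (a - m) * X 1 ^ b) := by
  have hb : pderiv 0 (X 1 ^ b : P) = 0 := by simp
  rw [show pd 0 = pderiv 0 from rfl, iterate_pderiv_mul_of_pderiv_eq_zero _ _ _ hb,
    iterate_pderiv_X_pow, Nat.cast_smul_eq_nsmul, smul_mul_assoc]

lemma iterate_pd_one_X_pow_mul_X_pow (m a b : ℕ) :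
    (pd 1)^[m] (X 0 ^ a * X 1 ^ b) = (b.descFactorial m : ℝ) • (X 0 ^ a * X 1 ^ (b - m)) := by
  have ha : pderiv 1 (X 0 ^ a : P) = 0 := by simp
  rw [show pd 1 = pderiv 1 from rfl, mul_comm, iterate_pderiv_mul_of_pderiv_eq_zero _ _ _ ha,
    iterate_pderiv_X_pow, Nat.cast_smul_eq_nsmul, smul_mul_assoc, mul_comm]

lemma iterate_pd_zero_iterate_pd_one_X_pow_mul_X_pow (m n a b : ℕ) :
    (pd 0)^[m] ((pd 1)^[n] (X 0 ^ a * X 1 ^ b)) =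
      (a.descFactorial m * b.descFactorial n : ℝ) • (X 0 ^ (a - m) * X 1 ^ (b - n)) := by
  rw [iterate_pd_one_X_pow_mul_X_pow, iterate_pd_eq_pow, map_smul, ← iterate_pd_eq_pow,
    iterate_pd_zero_X_pow_mul_X_pow, smul_smul, mul_comm]

def cgₗ (p : ℕ) : P →ₗ[ℝ] P →ₗ[ℝ] P :=
  LinearMap.mk₂ ℝ (CG p)
    (fun u u' v => by simp [CG, iterate_pd_eq_pow, add_mul, Finset.sum_add_distrib])
    (fun c u v => by simp [CG, iterate_pd_eq_pow, Finset.smul_sum, smul_comm c])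
    (fun u v v' => by simp [CG, iterate_pd_eq_pow, mul_add, Finset.sum_add_distrib])
    (fun c u v => by simp [CG, iterate_pd_eq_pow, Finset.smul_sum, smul_comm c])

def cgCoeff (p a b c d : ℕ) : ℤ :=
  ∑ k ∈ Finset.range (p + 1), (-1) ^ k * p.choose k *
    (a.descFactorial (p - k) * b.descFactorial k * c.descFactorial k * d.descFactorial (p - k))

lemma descFactorial_eq_zero_or_of_not_le {p k a b c d : ℕ}
    (h : ¬(p - k ≤ a ∧ k ≤ b ∧ k ≤ c ∧ p - k ≤ d)) :
    a.descFactorial (p - k) = 0 ∨ b.descFactorial k = 0 ∨ c.descFactorial k = 0 ∨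
      d.descFactorial (p - k) = 0 := by
  simp only [Nat.descFactorial_eq_zero_iff_lt]
  omega

lemma cgₗ_X_pow_mul_X_pow (p a b c d : ℕ) :
    cgₗ p (X 0 ^ a * X 1 ^ b) (X 0 ^ c * X 1 ^ d) =
      ((p.factorial : ℝ)⁻¹ * cgCoeff p a b c d) • (X 0 ^ (a + c - p) * X 1 ^ (b + d - p)) := by
  simp only [cgₗ, LinearMap.mk₂_apply, CG, iterate_pd_zero_iterate_pd_one_X_pow_mul_X_pow,
    smul_mul_smul_comm, smul_smul, cgCoeff, Int.cast_sum, Finset.mul_sum, Finset.sum_smul,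
    Finset.smul_sum]
  refine Finset.sum_congr rfl fun k hk => ?_
  have hkp : k ≤ p := Nat.lt_succ_iff.1 (Finset.mem_range.1 hk)
  push_cast
  by_cases h : p - k ≤ a ∧ k ≤ b ∧ k ≤ c ∧ p - k ≤ d
  · congr 1
    · ring
    · rw [mul_mul_mul_comm, ← pow_add, ← pow_add, show a - (p - k) + (c - k) = a + c - p by omega,
        show b - k + (d - (p - k)) = b + d - p by omega]
  · rcases descFactorial_eq_zero_or_of_not_le h with h0 | h0 | h0 | h0 <;> simp [h0]

-- The truncated exponents `a + c - p`, `b + d - p` of `cgₗ_X_pow_mul_X_pow` are therefore exact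
-- whenever the coefficient is nonzero.
lemma le_of_cgCoeff_ne_zero {p a b c d : ℕ} (h : cgCoeff p a b c d ≠ 0) :
    p ≤ a + c ∧ p ≤ b + d := by
  contrapose! h
  refine Finset.sum_eq_zero fun k hk => ?_
  have hkp : k ≤ p := Nat.lt_succ_iff.1 (Finset.mem_range.1 hk)
  have hk' : ¬(p - k ≤ a ∧ k ≤ b ∧ k ≤ c ∧ p - k ≤ d) := by omega
  rcases descFactorial_eq_zero_or_of_not_le hk' with h0 | h0 | h0 | h0 <;> simp [h0]

lemma le_of_factorial_inv_mul_cgCoeff_ne_zero {p a b c d : ℕ}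
    (h : (p.factorial : ℝ)⁻¹ * cgCoeff p a b c d ≠ 0) : p ≤ a + c ∧ p ≤ b + d :=
  le_of_cgCoeff_ne_zero (Int.cast_ne_zero.1 (right_ne_zero_of_mul h))

lemma smul_X_pow_mul_X_pow_congr {r : ℝ} {e f e' f' : ℕ} (h : r ≠ 0 → e = e' ∧ f = f') :
    r • (X 0 ^ e * X 1 ^ f : P) = r • (X 0 ^ e' * X 1 ^ f') := by
  by_cases hr : r = 0
  · simp [hr]
  · obtain ⟨rfl, rfl⟩ := h hr
    rfl

lemma cgₗ_cgₗ_X_pow_mul_X_pow_left (p q a a' b b' c c' : ℕ) :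
    cgₗ p (cgₗ q (X 0 ^ a * X 1 ^ a') (X 0 ^ b * X 1 ^ b')) (X 0 ^ c * X 1 ^ c') =
      (((q.factorial : ℝ)⁻¹ * cgCoeff q a a' b b') *
          ((p.factorial : ℝ)⁻¹ * cgCoeff p (a + b - q) (a' + b' - q) c c')) •
        (X 0 ^ (a + b + c - q - p) * X 1 ^ (a' + b' + c' - q - p)) := by
  rw [cgₗ_X_pow_mul_X_pow, map_smul, LinearMap.smul_apply, cgₗ_X_pow_mul_X_pow, smul_smul]
  refine smul_X_pow_mul_X_pow_congr fun hr => ?_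
  have := le_of_factorial_inv_mul_cgCoeff_ne_zero (left_ne_zero_of_mul hr)
  have := le_of_factorial_inv_mul_cgCoeff_ne_zero (right_ne_zero_of_mul hr)
  omega

lemma cgₗ_cgₗ_X_pow_mul_X_pow_right (p q a a' b b' c c' : ℕ) :
    cgₗ p (X 0 ^ a * X 1 ^ a') (cgₗ q (X 0 ^ b * X 1 ^ b') (X 0 ^ c * X 1 ^ c')) =
      (((q.factorial : ℝ)⁻¹ * cgCoeff q b b' c c') *
          ((p.factorial : ℝ)⁻¹ * cgCoeff p a a' (b + c - q) (b' + c' - q))) •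
        (X 0 ^ (a + b + c - q - p) * X 1 ^ (a' + b' + c' - q - p)) := by
  rw [cgₗ_X_pow_mul_X_pow, map_smul, cgₗ_X_pow_mul_X_pow, smul_smul, mul_comm]
  refine smul_X_pow_mul_X_pow_congr fun hr => ?_
  have := le_of_factorial_inv_mul_cgCoeff_ne_zero (left_ne_zero_of_mul hr)
  have := le_of_factorial_inv_mul_cgCoeff_ne_zero (right_ne_zero_of_mul hr)
  omega

def skewDefect (h u v : P) : P :=
  cgₗ 1 (cgₗ 3 h u) v - cgₗ 1 (cgₗ 3 h v) u - (1 / 2 : ℝ) • cgₗ 1 h (cgₗ 3 u v - cgₗ 3 v u)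

def skewCoeff (a b c : ℕ) : ℤ :=
  2 * (cgCoeff 3 a (4 - a) b (4 - b) * cgCoeff 1 (a + b - 3) (4 - a + (4 - b) - 3) c (4 - c) -
      cgCoeff 3 a (4 - a) c (4 - c) * cgCoeff 1 (a + c - 3) (4 - a + (4 - c) - 3) b (4 - b)) -
    (cgCoeff 3 b (4 - b) c (4 - c) * cgCoeff 1 a (4 - a) (b + c - 3) (4 - b + (4 - c) - 3) -
      cgCoeff 3 c (4 - c) b (4 - b) * cgCoeff 1 a (4 - a) (c + b - 3) (4 - c + (4 - b) - 3))

lemma skewDefect_X_pow_mul_X_pow (a b c : ℕ) :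
    skewDefect (X 0 ^ a * X 1 ^ (4 - a)) (X 0 ^ b * X 1 ^ (4 - b)) (X 0 ^ c * X 1 ^ (4 - c)) =
      ((12 : ℝ)⁻¹ * skewCoeff a b c) •
        (X 0 ^ (a + b + c - 3 - 1) * X 1 ^ (4 - a + (4 - b) + (4 - c) - 3 - 1)) := by
  rw [skewDefect, map_sub, cgₗ_cgₗ_X_pow_mul_X_pow_left, cgₗ_cgₗ_X_pow_mul_X_pow_left,
    cgₗ_cgₗ_X_pow_mul_X_pow_right, cgₗ_cgₗ_X_pow_mul_X_pow_right, add_right_comm a c b,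
    add_right_comm (4 - a) (4 - c) (4 - b), ← sub_smul, ← sub_smul, smul_smul, ← sub_smul]
  congr 1
  simp only [skewCoeff, Nat.factorial]
  push_cast
  ring

lemma skewCoeff_eq_zero : ∀ a ≤ 4, ∀ b ≤ 4, ∀ c ≤ 4, skewCoeff a b c = 0 := by
  decide

lemma isLinearMap_skewDefect₁ (u v : P) : IsLinearMap ℝ (skewDefect · u v) := by
  constructor <;> intros <;> simp only [skewDefect, map_add, map_sub, map_smul, LinearMap.add_apply,
    LinearMap.smul_apply] <;> module

lemma isLinearMap_skewDefect₂ (h v : P) : IsLinearMap ℝ (skewDefect h · v) := by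
  constructor <;> intros <;> simp only [skewDefect, map_add, map_sub, map_smul, LinearMap.add_apply,
    LinearMap.smul_apply] <;> module

lemma isLinearMap_skewDefect₃ (h u : P) : IsLinearMap ℝ (skewDefect h u) := by
  constructor <;> intros <;> simp only [skewDefect, map_add, map_sub, map_smul, LinearMap.add_apply,
    LinearMap.smul_apply] <;> module

theorem skewing_a4_eq_half (P4 u v : P)
    (hP : P4.IsHomogeneous 4) (hu : u.IsHomogeneous 4) (hv : v.IsHomogeneous 4) :
    CG 1 (CG 3 P4 u) v - CG 1 (CG 3 P4 v) u
      = ((1 : ℝ) / 2) • CG 1 P4 (CG 3 u v - CG 3 v u) := by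
  have mem_span : ∀ f : P, f.IsHomogeneous 4 →
      f ∈ Submodule.span ℝ ((fun a => X 0 ^ a * X 1 ^ (4 - a)) '' Set.Iic 4) := fun f hf => by
    rwa [← homogeneousSubmodule_fin_two_eq_span, mem_homogeneousSubmodule]
  have hdefect : skewDefect P4 u v = 0 := by
    refine eq_zero_of_mem_span_of_isLinearMap₃ isLinearMap_skewDefect₁ isLinearMap_skewDefect₂
      isLinearMap_skewDefect₃ ?_ (mem_span _ hP) (mem_span _ hu) (mem_span _ hv)
    rintro _ ⟨a, ha, rfl⟩ _ ⟨b, hb, rfl⟩ _ ⟨c, hc, rfl⟩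
    rw [skewDefect_X_pow_mul_X_pow, skewCoeff_eq_zero a ha b hb c hc, Int.cast_zero, mul_zero,
      zero_smul]
  exact sub_eq_zero.1 hdefect
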